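/- Any two consecutive outputs of Algorithm 2 differ by a single transposition with the strong homogeneous property: there are positions p ≠ q such that the two output lists agree at every position other than p and q, the values a and b interchanged at positions p and q satisfy a ≠ b, and every entry at a position strictly between p and q equals min(a,b), the smaller of the two interchanged values. -/

import Mathlib

/-- Steps (3)–(9) of Algorithm 2 for the current type `T`, examining indices `< M`
(`0`-indexed; the initial call has `M = n`, matching step (2)'s `M := n+1` in
`1`-indexed notation).  The arrays are the list `P` of values and the direction array
`V` with entries `±1`.  Step (3) finds the largest index `< M` holding the value `T`;
if none exists (step (4)) the updated direction array is returned via `Sum.inr` and the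
next type is to be tried.  Steps (5)–(7): depending on the direction `d = V_M`, `N` is
the nearest index beyond `M` (in direction `d`) holding a value `> T`; if `N` exists and
all directions strictly between `M` and `N` equal `d`, then `P_M ↔ P_N` and `V_M ↔ V_N`
are swapped, directions strictly between are reset to `1`, and the new pair `(P, V)` is
returned via `Sum.inl` (to be output by step (1)).  Otherwise (step (8)) `V_M` is
negated and the search continues below `M`. -/
def tryType (P : List ℕ) (T : ℕ) : ℕ → List ℤ → (List ℕ × List ℤ) ⊕ List ℤ
  | 0, V => Sum.inr V
  | M + 1, V =>
    if P.getD M 0 = T then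
      let d : ℤ := V.getD M 1
      let N? : Option ℕ :=
        if d = 1 then
          ((P.drop (M + 1)).findIdx? (fun x => decide (T < x))).map (fun off => M + 1 + off)
        else
          ((P.take M).reverse.findIdx? (fun x => decide (T < x))).map (fun off => M - 1 - off)
      match N? with
      | some N =>
        if ((V.drop (min M N + 1)).take (max M N - min M N - 1)).all (· == d) then
          Sum.inl ((P.set M (P.getD N 0)).set N T,
            ((V.set M (V.getD N 1)).set N d).mapIdx
              (fun i x => if min M N < i ∧ i < max M N then 1 else x))
        else tryType P T M (V.set M (-d))
      | none => tryType P T M (V.set M (-d))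
    else tryType P T M V

/-- One pass of Algorithm 2 between two outputs: try the types `T, T+1, …` in turn
(`fuel` many of them, so types `1, …, k` for the initial call with `T = 1` and
`fuel = k`); exit with `none` when the types are exhausted (step (4) with `T > k`). -/
def alg2Outer (P : List ℕ) : List ℤ → ℕ → ℕ → Option (List ℕ × List ℤ)
  | _, _, 0 => none
  | V, T, fuel + 1 =>
    match tryType P T P.length V with
    | Sum.inl PV => some PV
    | Sum.inr V' => alg2Outer P V' (T + 1) fuel

/-- From one output state of Algorithm 2 to the next (or `none` if the algorithm
exits): steps (2)–(9) starting with type `T = 1`. -/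
def alg2Next (k : ℕ) : List ℕ × List ℤ → Option (List ℕ × List ℤ)
  | (P, V) => alg2Outer P V 1 k

/-- The run of Algorithm 2 on the input list `P₀` with values among `1, …, k`:
`alg2Run k P₀ t` is the `t`-th output (the list `P` together with the direction array
`V`, the latter initialized to all `1`s), or `none` if the algorithm has already
exited. -/
def alg2Run (k : ℕ) (P₀ : List ℕ) : ℕ → Option (List ℕ × List ℤ)
  | 0 => some (P₀, List.replicate P₀.length 1)
  | t + 1 => (alg2Run k P₀ t).bind (alg2Next k)


private lemma getD_set' {α} (V : List α) (i j : ℕ) (c d : α) :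
    (V.set i c).getD j d = if i = j ∧ i < V.length then c else V.getD j d := by
  simp only [List.getD_eq_getElem?_getD, List.getElem?_set]
  by_cases h1 : i = j
  · by_cases h2 : i < V.length
    · subst h1; simp [h2]
    · subst h1
      rw [if_pos rfl, if_neg h2, if_neg (by tauto), List.getElem?_eq_none (by omega)]
  · rw [if_neg h1, if_neg (by tauto)]

private lemma getD_eq_getElem' {α} (V : List α) (j : ℕ) (d : α) (h : j < V.length) :
    V.getD j d = V[j] := by
  simp [List.getD_eq_getElem?_getD, List.getElem?_eq_getElem h]

private lemma fi_some {p : ℕ → Bool} :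
    ∀ (l : List ℕ) (s i : ℕ), (List.findIdx? p l).map (· + s) = some i →
    ∃ off, i = s + off ∧ off < l.length ∧ p (l.getD off 0) = true ∧
      ∀ j, j < off → p (l.getD j 0) = false := by
  intro l
  induction l with
  | nil => intro s i h; simp [List.findIdx?_nil] at h
  | cons x xs ih =>
    intro s i h
    rw [List.findIdx?_cons] at h
    by_cases hx : p x
    · rw [if_pos hx] at h
      refine ⟨0, by simpa using h.symm, by simp, by simpa using hx, by omega⟩
    · rw [if_neg (by simpa using hx)] at h
      have h' : (List.findIdx? p xs).map (· + (s+1)) = some i := by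
        rw [Option.map_map] at h; rw [← h]; congr 1; funext y; simp only [Function.comp_apply]; omega
      obtain ⟨off, rfl, hlt, hp, hall⟩ := ih (s+1) i h'
      refine ⟨off + 1, by omega, by simp; omega, by simpa using hp, ?_⟩
      intro j hj
      cases j with
      | zero => simpa using hx
      | succ j' => simpa using hall j' (by omega)

private lemma fi_none {p : ℕ → Bool} (l : List ℕ) (h : List.findIdx? p l = none)
    (j : ℕ) (hj : j < l.length) : p (l.getD j 0) = false := by
  rw [List.findIdx?_eq_none_iff] at h
  exact h (l.getD j 0) (by rw [getD_eq_getElem' _ _ _ hj]; exact List.getElem_mem hj)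

/-- Static "would-swap" predicate, relative to the pass-start direction array `V`. -/
def SP (P : List ℕ) (V : List ℤ) (T m N : ℕ) : Prop :=
  m < P.length ∧ N < P.length ∧ P.getD m 0 = T ∧ T < P.getD N 0 ∧
  (∀ j, min m N < j → j < max m N → P.getD j 0 ≤ T) ∧
  ((V.getD m 1 = 1 ∧ m < N ∧ ∀ j, m < j → j < N → V.getD j 1 = -1) ∨
   (V.getD m 1 = -1 ∧ N < m ∧ ∀ j, N < j → j < m →
      V.getD j 1 = (if P.getD j 0 = T then -1 else 1)))

/-- "Would-swap" predicate relative to the array handed to `tryType` at cutoff `M`. -/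
def GoodC (P : List ℕ) (T M : ℕ) (V : List ℤ) (m N : ℕ) : Prop :=
  m < P.length ∧ N < P.length ∧ P.getD m 0 = T ∧ T < P.getD N 0 ∧
  (∀ j, min m N < j → j < max m N → P.getD j 0 ≤ T) ∧
  ((V.getD m 1 = 1 ∧ m < N ∧ ∀ j, m < j → j < N →
      (if P.getD j 0 = T ∧ j < M then -(V.getD j 1) else V.getD j 1) = 1) ∨
   (V.getD m 1 = -1 ∧ N < m ∧ ∀ j, N < j → j < m → V.getD j 1 = -1))

private lemma goodC_congr {P : List ℕ} {T M M' : ℕ} {V V' : List ℤ} {m N : ℕ}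
    (h1 : V.getD m 1 = V'.getD m 1)
    (h2 : ∀ j, m < j → (if P.getD j 0 = T ∧ j < M then -(V.getD j 1) else V.getD j 1)
        = (if P.getD j 0 = T ∧ j < M' then -(V'.getD j 1) else V'.getD j 1))
    (h3 : ∀ j, j < m → V.getD j 1 = V'.getD j 1) :
    GoodC P T M V m N → GoodC P T M' V' m N := by
  rintro ⟨a1, a2, a3, a4, a5, a6⟩
  refine ⟨a1, a2, a3, a4, a5, ?_⟩
  rcases a6 with ⟨b1, b2, b3⟩ | ⟨b1, b2, b3⟩
  · exact Or.inl ⟨h1 ▸ b1, b2, fun j hj1 hj2 => (h2 j hj1).symm.trans (b3 j hj1 hj2)⟩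
  · exact Or.inr ⟨h1 ▸ b1, b2, fun j hj1 hj2 => (h3 j hj2).symm.trans (b3 j hj1 hj2)⟩

private lemma goodC_step_ne {P : List ℕ} {T M : ℕ} {V : List ℤ} {m N : ℕ}
    (hPM : ¬ P.getD M 0 = T) :
    GoodC P T (M+1) V m N ↔ GoodC P T M V m N := by
  have key : ∀ j, (if P.getD j 0 = T ∧ j < M + 1 then -(V.getD j 1) else V.getD j 1)
      = (if P.getD j 0 = T ∧ j < M then -(V.getD j 1) else V.getD j 1) := by
    intro j
    by_cases hj : P.getD j 0 = T
    · have hne : j ≠ M := fun h => hPM (h ▸ hj)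
      by_cases hjM : j < M
      · rw [if_pos ⟨hj, by omega⟩, if_pos ⟨hj, hjM⟩]
      · rw [if_neg (fun hh => absurd hh.2 (by omega)), if_neg (fun hh => hjM hh.2)]
    · rw [if_neg (fun hh => hj hh.1), if_neg (fun hh => hj hh.1)]
  constructor
  · exact goodC_congr rfl (fun j _ => key j) (fun _ _ => rfl)
  · exact goodC_congr rfl (fun j _ => (key j).symm) (fun _ _ => rfl)

private lemma goodC_step_set {P : List ℕ} {T M : ℕ} {V : List ℤ} {m N : ℕ}
    (hM : M < V.length) (hPM : P.getD M 0 = T) (hm : m < M) (c : ℤ) (hc : c = -(V.getD M 1)) :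
    GoodC P T (M+1) V m N ↔ GoodC P T M (V.set M c) m N := by
  have hset : ∀ j, (V.set M c).getD j 1 = if M = j then c else V.getD j 1 := by
    intro j; rw [getD_set']
    by_cases h : M = j
    · rw [if_pos ⟨h, hM⟩, if_pos h]
    · rw [if_neg (by tauto), if_neg h]
  have key : ∀ j, m < j → (if P.getD j 0 = T ∧ j < M + 1 then -(V.getD j 1) else V.getD j 1)
      = (if P.getD j 0 = T ∧ j < M then -((V.set M c).getD j 1) else (V.set M c).getD j 1) := by
    intro j _
    by_cases hjM : j = M
    · subst hjM
      have hv : (V.set j c).getD j 1 = c := by rw [hset j, if_pos rfl]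
      rw [hv, if_pos ⟨hPM, by omega⟩, if_neg (fun hh => absurd hh.2 (lt_irrefl j)), hc]
    · have hv : (V.set M c).getD j 1 = V.getD j 1 := by
        rw [hset j, if_neg (fun h => hjM h.symm)]
      rw [hv]
      by_cases hj2 : P.getD j 0 = T
      · by_cases hj3 : j < M
        · rw [if_pos ⟨hj2, by omega⟩, if_pos ⟨hj2, hj3⟩]
        · rw [if_neg (fun hh => absurd hh.2 (by omega)), if_neg (fun hh => hj3 hh.2)]
      · rw [if_neg (fun hh => hj2 hh.1), if_neg (fun hh => hj2 hh.1)]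
  have h1 : V.getD m 1 = (V.set M c).getD m 1 := by
    rw [hset m, if_neg (by omega)]
  have h3 : ∀ j, j < m → V.getD j 1 = (V.set M c).getD j 1 := by
    intro j hj; rw [hset j, if_neg (by omega)]
  constructor
  · exact goodC_congr h1 key h3
  · exact goodC_congr h1.symm (fun j hj => (key j hj).symm) (fun j hj => (h3 j hj).symm)

/-- KEY: if a swap would happen at `(m, N)` for type `T` but some entry strictly
between has value `< T`, then some strictly smaller type would also swap. -/
private lemma key_lemma (P : List ℕ) (V : List ℤ) (T m N : ℕ) (h : SP P V T m N)
    (j₀ : ℕ) (hj1 : min m N < j₀) (hj2 : j₀ < max m N) (hj3 : P.getD j₀ 0 < T) :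
    ∃ T' m' N', T' < T ∧ SP P V T' m' N' := by
  classical
  obtain ⟨hm, hN, hPm, hPN, hbet, hdir⟩ := h
  have hocc : ∃ v, ∃ j, min m N < j ∧ j < max m N ∧ P.getD j 0 = v :=
    ⟨P.getD j₀ 0, j₀, hj1, hj2, rfl⟩
  set T'' := Nat.find hocc with hT''def
  obtain ⟨j₁, hj₁a, hj₁b, hj₁c⟩ := Nat.find_spec hocc
  rw [← hT''def] at hj₁c
  have hminval : ∀ j, min m N < j → j < max m N → T'' ≤ P.getD j 0 :=
    fun j ha hb => Nat.find_min' hocc ⟨j, ha, hb, rfl⟩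
  have hTT : T'' < T := by
    have := Nat.find_min' hocc ⟨j₀, hj1, hj2, rfl⟩
    omega
  rcases hdir with ⟨hvm, hmN, hdirs⟩ | ⟨hvm, hNm, hdirs⟩
  · -- direction +1 : interval is (m, N)
    have hmq : T'' < P.getD m 0 := by omega
    set N'' := Nat.findGreatest (fun i => T'' < P.getD i 0) (j₁ - 1) with hN''def
    have hN''p : T'' < P.getD N'' 0 :=
      Nat.findGreatest_spec (P := fun i => T'' < P.getD i 0) (m := m) (by omega) hmq
    have hN''ge : m ≤ N'' := Nat.le_findGreatest (P := fun i => T'' < P.getD i 0) (by omega) hmq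
    have hN''lt : N'' < j₁ := by
      have := Nat.findGreatest_le (P := fun i => T'' < P.getD i 0) (j₁ - 1)
      omega
    have hmax : ∀ i, N'' < i → i < j₁ → P.getD i 0 ≤ T'' := by
      intro i hi1 hi2
      have := Nat.findGreatest_is_greatest (P := fun i => T'' < P.getD i 0)
        (n := j₁ - 1) hi1 (by omega)
      omega
    refine ⟨T'', j₁, N'', hTT, ?_⟩
    refine ⟨by omega, by omega, hj₁c, hN''p, ?_, Or.inr ⟨?_, hN''lt, ?_⟩⟩
    · intro j ha hb
      exact hmax j (by omega) (by omega)
    · exact hdirs j₁ (by omega) (by omega)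
    · intro j ha hb
      have hjm : m < j := by omega
      have hjN : j < N := by omega
      rw [if_pos (by have := hmax j ha hb; have := hminval j (by omega) (by omega); omega)]
      exact hdirs j hjm hjN
  · -- direction -1 : interval is (N, m)
    set js := Nat.findGreatest (fun j => N < j ∧ P.getD j 0 = T'') (m - 1) with hjsdef
    have hjsp : N < js ∧ P.getD js 0 = T'' :=
      Nat.findGreatest_spec (P := fun j => N < j ∧ P.getD j 0 = T'') (m := j₁) (by omega) ⟨by omega, hj₁c⟩
    have hjslt : js < m := by
      have := Nat.findGreatest_le (P := fun j => N < j ∧ P.getD j 0 = T'') (m - 1)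
      omega
    have hgr : ∀ i, js < i → i < m → ¬(N < i ∧ P.getD i 0 = T'') := by
      intro i hi1 hi2
      exact Nat.findGreatest_is_greatest (P := fun j => N < j ∧ P.getD j 0 = T'')
        (n := m - 1) hi1 (by omega)
    have hEx : ∃ i, js < i ∧ T'' < P.getD i 0 := ⟨m, hjslt, by omega⟩
    set N'' := Nat.find hEx with hN''def
    have hN''s : js < N'' ∧ T'' < P.getD N'' 0 := Nat.find_spec hEx
    have hN''le : N'' ≤ m := Nat.find_min' hEx ⟨hjslt, by omega⟩
    have hempty : ∀ i, js < i → i < N'' → False := by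
      intro i hi1 hi2
      have hle : ¬(js < i ∧ T'' < P.getD i 0) := Nat.find_min hEx hi2
      have h1 : P.getD i 0 ≤ T'' := by omega
      have h2 : T'' ≤ P.getD i 0 := hminval i (by omega) (by omega)
      exact hgr i hi1 (by omega) ⟨by omega, by omega⟩
    refine ⟨T'', js, N'', hTT, ?_⟩
    refine ⟨by omega, by omega, hjsp.2, hN''s.2, ?_, Or.inl ⟨?_, hN''s.1, ?_⟩⟩
    · intro j ha hb
      exact absurd (hempty j (by omega) (by omega)) not_false
    · have := hdirs js hjsp.1 hjslt
      rw [if_neg (by omega)] at this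
      exact this
    · intro j ha hb
      exact absurd (hempty j ha hb) not_false

private lemma getD_drop {α} (P : List α) (a i : ℕ) (d : α) :
    (P.drop a).getD i d = P.getD (a+i) d := by
  simp [List.getD_eq_getElem?_getD, List.getElem?_drop]

private lemma getD_revtake {α} (P : List α) (a i : ℕ) (d : α)
    (ha : a ≤ P.length) (hi : i < a) :
    ((P.take a).reverse).getD i d = P.getD (a-1-i) d := by
  have h1 : (P.take a).length = a := by simp; omega
  have h2 : ((P.take a).reverse).length = a := by simp; omega
  rw [getD_eq_getElem' _ _ _ (by omega), getD_eq_getElem' _ _ _ (by omega),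
    List.getElem_reverse]
  rw [List.getElem_take]
  congr 1
  omega

private lemma all_between_iff (V : List ℤ) (lo hi : ℕ) (d : ℤ) (hhi : hi ≤ V.length) :
    (((V.drop (lo + 1)).take (hi - lo - 1)).all (· == d) = true) ↔
      ∀ j, lo < j → j < hi → V.getD j 1 = d := by
  rw [List.all_eq_true]
  constructor
  · intro hx j hj1 hj2
    have hidx : j - (lo+1) < ((V.drop (lo+1)).take (hi-lo-1)).length := by
      simp; omega
    have hmem := hx _ (List.getElem_mem hidx)
    rw [List.getElem_take, List.getElem_drop, beq_iff_eq] at hmem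
    rw [← hmem, getD_eq_getElem' _ _ _ (by omega)]
    congr 1
    omega
  · intro hv x hx
    rw [List.mem_iff_getElem] at hx
    obtain ⟨i, hilen, rfl⟩ := hx
    have hilen' : lo + 1 + i < hi ∧ lo + 1 + i < V.length := by
      simp at hilen; omega
    rw [List.getElem_take, List.getElem_drop, beq_iff_eq,
      ← getD_eq_getElem' _ _ _ hilen'.2]
    exact hv (lo+1+i) (by omega) hilen'.1

private lemma fi_some0 {p : ℕ → Bool} (l : List ℕ) (i : ℕ)
    (h : List.findIdx? p l = some i) :
    i < l.length ∧ p (l.getD i 0) = true ∧ ∀ j, j < i → p (l.getD j 0) = false := by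
  obtain ⟨off, h0, hlt, hp, hall⟩ := fi_some l 0 i (by rw [h]; rfl)
  have hi : i = off := by omega
  subst hi
  exact ⟨hlt, hp, hall⟩

/-- If the swap condition holds at the examined position `M` itself, the code's
search and homogeneity check both succeed. -/
private lemma goodC_self_find (P : List ℕ) (T M : ℕ) (V : List ℤ) (N : ℕ)
    (hlen : V.length = P.length) (hM : M < P.length)
    (hg : GoodC P T (M+1) V M N) :
    ((if V.getD M 1 = 1
      then ((P.drop (M + 1)).findIdx? (fun x => decide (T < x))).map (fun off => M + 1 + off)
      else (((P.take M).reverse.findIdx? (fun x => decide (T < x))).map (fun off => M - 1 - off)))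
      = some N) ∧
    (((V.drop (min M N + 1)).take (max M N - min M N - 1)).all (· == V.getD M 1) = true) := by
  obtain ⟨hm, hN, hPm, hPN, hbet, hdisj⟩ := hg
  rcases hdisj with ⟨hvm, hMN, hdirs⟩ | ⟨hvm, hNM, hdirs⟩
  · rw [if_pos hvm]
    have hminMN : min M N = M := by omega
    have hmaxMN : max M N = N := by omega
    constructor
    · -- the findIdx? must find exactly offset N - (M+1)
      cases hfind : (P.drop (M + 1)).findIdx? (fun x => decide (T < x)) with
      | none =>
        exfalso
        have := fi_none _ hfind (N - (M+1)) (by simp; omega)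
        rw [getD_drop] at this
        have hNidx : M + 1 + (N - (M+1)) = N := by omega
        rw [hNidx] at this
        simp only [decide_eq_false_iff_not, not_lt] at this
        omega
      | some off =>
        obtain ⟨hofflt, hp, hfirst⟩ := fi_some0 _ _ hfind
        simp only [Option.map_some]
        congr 1
        rw [getD_drop] at hp
        simp only [decide_eq_true_eq] at hp
        simp only [List.length_drop] at hofflt
        -- N' := M + 1 + off. Show N' = N.
        by_contra hne
        rcases Nat.lt_or_ge (M+1+off) N with hlt | hge
        · -- found index strictly inside (M, N): value ≤ T contradicts hp
          have := hbet (M+1+off) (by omega) (by omega)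
          omega
        · -- N strictly before found index: first-ness contradicts P_N > T
          have hNoff : N - (M+1) < off := by omega
          have := hfirst _ hNoff
          rw [getD_drop] at this
          have hNidx : M + 1 + (N - (M+1)) = N := by omega
          rw [hNidx] at this
          simp only [decide_eq_false_iff_not, not_lt] at this
          omega
    · rw [hminMN, hmaxMN, all_between_iff V M N (V.getD M 1) (by omega), hvm]
      intro j hj1 hj2
      have := hdirs j hj1 hj2
      rw [if_neg (fun hh => by omega)] at this
      exact this
  · rw [if_neg (by rw [hvm]; norm_num)]
    have hminMN : min M N = N := by omega
    have hmaxMN : max M N = M := by omega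
    constructor
    · cases hfind : (P.take M).reverse.findIdx? (fun x => decide (T < x)) with
      | none =>
        exfalso
        have := fi_none _ hfind (M - 1 - N) (by simp; omega)
        rw [getD_revtake _ _ _ _ (by omega) (by omega)] at this
        have hNidx : M - 1 - (M - 1 - N) = N := by omega
        rw [hNidx] at this
        simp only [decide_eq_false_iff_not, not_lt] at this
        omega
      | some off =>
        obtain ⟨hofflt, hp, hfirst⟩ := fi_some0 _ _ hfind
        simp only [Option.map_some]
        congr 1
        have hofflt' : off < M := by
          have : ((P.take M).reverse).length = M := by simp; omega
          omega
        rw [getD_revtake _ _ _ _ (by omega) (by omega)] at hp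
        simp only [decide_eq_true_eq] at hp
        by_contra hne
        rcases Nat.lt_or_ge (M-1-off) N with hlt | hge
        · -- N is closer to M than found index: first-ness contradiction
          have hNoff : M - 1 - N < off := by omega
          have := hfirst _ hNoff
          rw [getD_revtake _ _ _ _ (by omega) (by omega)] at this
          have hNidx : M - 1 - (M - 1 - N) = N := by omega
          rw [hNidx] at this
          simp only [decide_eq_false_iff_not, not_lt] at this
          omega
        · -- found index strictly inside (N, M)
          have := hbet (M-1-off) (by omega) (by omega)
          omega
    · rw [hminMN, hmaxMN, all_between_iff V N M (V.getD M 1) (by omega), hvm]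
      exact hdirs

/-- Conversely, if the code's search and check succeed, the swap condition holds. -/
private lemma find_good (P : List ℕ) (T M : ℕ) (V : List ℤ) (N : ℕ)
    (hlen : V.length = P.length) (hM : M < P.length) (hPM : P.getD M 0 = T)
    (hpm : ∀ j, j < V.length → V.getD j 1 = 1 ∨ V.getD j 1 = -1)
    (hfind : (if V.getD M 1 = 1
      then ((P.drop (M + 1)).findIdx? (fun x => decide (T < x))).map (fun off => M + 1 + off)
      else (((P.take M).reverse.findIdx? (fun x => decide (T < x))).map (fun off => M - 1 - off)))
      = some N)
    (hall : ((V.drop (min M N + 1)).take (max M N - min M N - 1)).all (· == V.getD M 1) = true) :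
    GoodC P T (M+1) V M N := by
  by_cases hvm : V.getD M 1 = 1
  · rw [if_pos hvm] at hfind
    obtain ⟨off, hoffeq, hN⟩ := Option.map_eq_some_iff.mp hfind
    obtain ⟨hofflt, hp, hfirst⟩ := fi_some0 _ _ hoffeq
    subst hN
    rw [getD_drop] at hp
    simp only [decide_eq_true_eq] at hp
    simp only [List.length_drop] at hofflt
    have hminMN : min M (M+1+off) = M := by omega
    have hmaxMN : max M (M+1+off) = M+1+off := by omega
    refine ⟨hM, by omega, hPM, by omega, ?_, Or.inl ⟨hvm, by omega, ?_⟩⟩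
    · intro j hj1 hj2
      rw [hminMN] at hj1; rw [hmaxMN] at hj2
      have := hfirst (j - (M+1)) (by omega)
      rw [getD_drop] at this
      simp only [decide_eq_false_iff_not, not_lt] at this
      have hidx : M + 1 + (j - (M+1)) = j := by omega
      rwa [hidx] at this
    · intro j hj1 hj2
      rw [hminMN, hmaxMN, all_between_iff V M (M+1+off) (V.getD M 1) (by omega)] at hall
      rw [if_neg (fun hh => by omega)]
      rw [hall j hj1 hj2, hvm]
  · rw [if_neg hvm] at hfind
    obtain ⟨off, hoffeq, hN⟩ := Option.map_eq_some_iff.mp hfind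
    obtain ⟨hofflt, hp, hfirst⟩ := fi_some0 _ _ hoffeq
    subst hN
    have hofflt' : off < M := by
      have : ((P.take M).reverse).length = M := by simp; omega
      omega
    rw [getD_revtake _ _ _ _ (by omega) (by omega)] at hp
    simp only [decide_eq_true_eq] at hp
    have hvm' : V.getD M 1 = -1 := by
      rcases hpm M (by omega) with h | h
      · exact absurd h hvm
      · exact h
    have hminMN : min M (M-1-off) = M-1-off := by omega
    have hmaxMN : max M (M-1-off) = M := by omega
    refine ⟨hM, by omega, hPM, by omega, ?_, Or.inr ⟨hvm', by omega, ?_⟩⟩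
    · intro j hj1 hj2
      rw [hminMN] at hj1; rw [hmaxMN] at hj2
      have := hfirst (M - 1 - j) (by omega)
      rw [getD_revtake _ _ _ _ (by omega) (by omega)] at this
      have hidx : M - 1 - (M - 1 - j) = j := by omega
      rw [hidx] at this
      simp only [decide_eq_false_iff_not, not_lt] at this
      exact this
    · intro j hj1 hj2
      rw [hminMN, hmaxMN, all_between_iff V (M-1-off) M (V.getD M 1) (by omega)] at hall
      rw [hall j hj1 hj2, hvm']

/-- Complete characterization of a failed scan (`Sum.inr`). -/
private lemma tryType_inr_spec (P : List ℕ) (T : ℕ) :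
    ∀ (M : ℕ) (V W : List ℤ), M ≤ P.length → V.length = P.length →
    tryType P T M V = Sum.inr W →
    W.length = V.length ∧
    (∀ j, W.getD j 1 = if P.getD j 0 = T ∧ j < M then -(V.getD j 1) else V.getD j 1) ∧
    (∀ m N, m < M → ¬ GoodC P T M V m N) := by
  intro M
  induction M with
  | zero =>
    intro V W _ _ h
    rw [tryType] at h
    cases h
    exact ⟨rfl, fun j => by rw [if_neg (fun hh => by omega)],
      fun m N hm => absurd hm (by omega)⟩
  | succ M ih =>
    intro V W hM hlen h
    have hMV : M < V.length := by omega
    rw [tryType] at h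
    by_cases hPM : P.getD M 0 = T
    · rw [if_pos hPM] at h
      simp only [] at h
      have step : tryType P T M (V.set M (-(V.getD M 1))) = Sum.inr W ∧
          (∀ N', ¬ ((if V.getD M 1 = 1
              then ((P.drop (M + 1)).findIdx? (fun x => decide (T < x))).map
                (fun off => M + 1 + off)
              else (((P.take M).reverse.findIdx? (fun x => decide (T < x))).map
                (fun off => M - 1 - off))) = some N' ∧
            ((V.drop (min M N' + 1)).take (max M N' - min M N' - 1)).all
              (· == V.getD M 1) = true)) := by
        cases hscv : (if V.getD M 1 = 1
            then ((P.drop (M + 1)).findIdx? (fun x => decide (T < x))).map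
              (fun off => M + 1 + off)
            else (((P.take M).reverse.findIdx? (fun x => decide (T < x))).map
              (fun off => M - 1 - off))) with
        | none =>
          rw [hscv] at h
          have h2 : tryType P T M (V.set M (-(V.getD M 1))) = Sum.inr W := h
          exact ⟨h2, fun N' hN' => absurd hN'.1 (by simp)⟩
        | some N' =>
          rw [hscv] at h
          have h2 : (if ((V.drop (min M N' + 1)).take (max M N' - min M N' - 1)).all
                (· == V.getD M 1) = true
              then Sum.inl ((P.set M (P.getD N' 0)).set N' T,
                ((V.set M (V.getD N' 1)).set N' (V.getD M 1)).mapIdx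
                  (fun i x => if min M N' < i ∧ i < max M N' then 1 else x))
              else tryType P T M (V.set M (-(V.getD M 1)))) = Sum.inr W := h
          by_cases hall : ((V.drop (min M N' + 1)).take (max M N' - min M N' - 1)).all
              (· == V.getD M 1) = true
          · rw [if_pos hall] at h2
            exact absurd h2 (by simp)
          · rw [if_neg hall] at h2
            refine ⟨h2, fun N'' hN'' => ?_⟩
            cases Option.some.inj hN''.1
            exact hall hN''.2
      obtain ⟨hrec, hnosw⟩ := step
      obtain ⟨ih1, ih2, ih3⟩ := ih (V.set M (-(V.getD M 1))) W (by omega)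
        (by simpa using hlen) hrec
      have hvset : ∀ j, (V.set M (-(V.getD M 1))).getD j 1 =
          if M = j then -(V.getD M 1) else V.getD j 1 := by
        intro j; rw [getD_set']
        by_cases hj : M = j
        · rw [if_pos ⟨hj, hMV⟩, if_pos hj]
        · rw [if_neg (fun hh => hj hh.1), if_neg hj]
      refine ⟨ih1.trans (by simp), ?_, ?_⟩
      · intro j
        rw [ih2 j]
        by_cases hjM : j = M
        · subst hjM
          rw [if_neg (fun hh => absurd hh.2 (lt_irrefl j)), hvset j, if_pos rfl,
            if_pos ⟨hPM, by omega⟩]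
        · have hv : (V.set M (-(V.getD M 1))).getD j 1 = V.getD j 1 := by
            rw [hvset j, if_neg (fun hh => hjM hh.symm)]
          rw [hv]
          by_cases hj : P.getD j 0 = T
          · by_cases hjlt : j < M
            · rw [if_pos ⟨hj, hjlt⟩, if_pos ⟨hj, by omega⟩]
            · rw [if_neg (fun hh => hjlt hh.2), if_neg (fun hh => absurd hh.2 (by omega))]
          · rw [if_neg (fun hh => hj hh.1), if_neg (fun hh => hj hh.1)]
      · intro m N hm
        by_cases hmM : m = M
        · subst hmM
          intro hg
          obtain ⟨hfind', hall'⟩ := goodC_self_find P T m V N hlen (by omega) hg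
          exact hnosw N ⟨hfind', hall'⟩
        · rw [goodC_step_set hMV hPM (by omega) (-(V.getD M 1)) rfl]
          exact ih3 m N (by omega)
    · rw [if_neg hPM] at h
      obtain ⟨ih1, ih2, ih3⟩ := ih V W (by omega) hlen h
      refine ⟨ih1, ?_, ?_⟩
      · intro j
        rw [ih2 j]
        by_cases hj : P.getD j 0 = T
        · have : j ≠ M := fun hh => hPM (hh ▸ hj)
          by_cases hjM : j < M
          · rw [if_pos ⟨hj, hjM⟩, if_pos ⟨hj, by omega⟩]
          · rw [if_neg (fun hh => hjM hh.2), if_neg (fun hh => absurd hh.2 (by omega))]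
        · rw [if_neg (fun hh => hj hh.1), if_neg (fun hh => hj hh.1)]
      · intro m N hm
        by_cases hmM : m = M
        · subst hmM
          intro hg
          exact absurd hg.2.2.1 hPM
        · rw [goodC_step_ne hPM]
          exact ih3 m N (by omega)

/-- Complete characterization of a successful scan (`Sum.inl`). -/
private lemma tryType_inl_spec (P : List ℕ) (T : ℕ) :
    ∀ (M : ℕ) (V : List ℤ) (P' : List ℕ) (V' : List ℤ), M ≤ P.length → V.length = P.length →
    (∀ j, j < V.length → V.getD j 1 = 1 ∨ V.getD j 1 = -1) →
    tryType P T M V = Sum.inl (P', V') →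
    ∃ m N, m < M ∧ GoodC P T M V m N ∧
      P' = (P.set m (P.getD N 0)).set N T ∧ V'.length = V.length ∧
      (∀ j, j < V'.length → V'.getD j 1 = 1 ∨ V'.getD j 1 = -1) := by
  intro M
  induction M with
  | zero =>
    intro V P' V' _ _ _ h
    rw [tryType] at h
    exact absurd h (by simp)
  | succ M ih =>
    intro V P' V' hM hlen hpm h
    have hMV : M < V.length := by omega
    have hvset : ∀ c j, (V.set M c).getD j 1 = if M = j then c else V.getD j 1 := by
      intro c j; rw [getD_set']
      by_cases hj : M = j
      · rw [if_pos ⟨hj, hMV⟩, if_pos hj]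
      · rw [if_neg (fun hh => hj hh.1), if_neg hj]
    have hpm' : ∀ j, j < (V.set M (-(V.getD M 1))).length →
        (V.set M (-(V.getD M 1))).getD j 1 = 1 ∨ (V.set M (-(V.getD M 1))).getD j 1 = -1 := by
      intro j hj
      rw [hvset]
      by_cases hMj : M = j
      · rw [if_pos hMj]
        rcases hpm M hMV with h' | h' <;> rw [h'] <;> norm_num
      · rw [if_neg hMj]
        exact hpm j (by simpa using hj)
    rw [tryType] at h
    by_cases hPM : P.getD M 0 = T
    · rw [if_pos hPM] at h
      simp only [] at h
      cases hscv : (if V.getD M 1 = 1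
          then ((P.drop (M + 1)).findIdx? (fun x => decide (T < x))).map
            (fun off => M + 1 + off)
          else (((P.take M).reverse.findIdx? (fun x => decide (T < x))).map
            (fun off => M - 1 - off))) with
      | none =>
        rw [hscv] at h
        have h2 : tryType P T M (V.set M (-(V.getD M 1))) = Sum.inl (P', V') := h
        obtain ⟨m, N, hm, hg, hP', hV'len, hV'pm⟩ :=
          ih (V.set M (-(V.getD M 1))) P' V' (by omega) (by simpa using hlen) hpm' h2
        exact ⟨m, N, by omega,
          (goodC_step_set hMV hPM hm _ rfl).mpr hg,
          hP', hV'len.trans (by simp), hV'pm⟩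
      | some N' =>
        rw [hscv] at h
        have h2 : (if ((V.drop (min M N' + 1)).take (max M N' - min M N' - 1)).all
              (· == V.getD M 1) = true
            then Sum.inl ((P.set M (P.getD N' 0)).set N' T,
              ((V.set M (V.getD N' 1)).set N' (V.getD M 1)).mapIdx
                (fun i x => if min M N' < i ∧ i < max M N' then 1 else x))
            else tryType P T M (V.set M (-(V.getD M 1)))) = Sum.inl (P', V') := h
        by_cases hall : ((V.drop (min M N' + 1)).take (max M N' - min M N' - 1)).all
            (· == V.getD M 1) = true
        · rw [if_pos hall] at h2
          simp only [Sum.inl.injEq, Prod.mk.injEq] at h2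
          obtain ⟨hP', hV'⟩ := h2
          have hgood : GoodC P T (M+1) V M N' :=
            find_good P T M V N' hlen (by omega) hPM hpm hscv hall
          have hN'len : N' < P.length := hgood.2.1
          refine ⟨M, N', by omega, hgood, hP'.symm, ?_, ?_⟩
          · rw [← hV']; simp
          · intro j hj
            rw [← hV'] at hj ⊢
            have hjbase : j < ((V.set M (V.getD N' 1)).set N' (V.getD M 1)).length := by
              simpa using (by simpa using hj : j < V.length)
            rw [getD_eq_getElem' _ _ _ (by simpa using hjbase), List.getElem_mapIdx]
            by_cases hb : min M N' < j ∧ j < max M N'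
            · rw [if_pos hb]; left; rfl
            · rw [if_neg hb]
              rw [← getD_eq_getElem' _ _ 1 hjbase]
              rw [getD_set', getD_set']
              have hjV : j < V.length := by simpa using hj
              by_cases h1 : N' = j ∧ N' < (V.set M (V.getD N' 1)).length
              · rw [if_pos h1]; exact hpm M hMV
              · rw [if_neg h1]
                by_cases h2 : M = j ∧ M < V.length
                · rw [if_pos h2]; exact hpm N' (by omega)
                · rw [if_neg h2]; exact hpm j hjV
        · rw [if_neg hall] at h2
          obtain ⟨m, N, hm, hg, hP', hV'len, hV'pm⟩ :=
            ih (V.set M (-(V.getD M 1))) P' V' (by omega) (by simpa using hlen) hpm' h2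
          exact ⟨m, N, by omega,
            (goodC_step_set hMV hPM hm _ rfl).mpr hg,
            hP', hV'len.trans (by simp), hV'pm⟩
    · rw [if_neg hPM] at h
      obtain ⟨m, N, hm, hg, hP', hV'len, hV'pm⟩ := ih V P' V' (by omega) hlen hpm h
      exact ⟨m, N, by omega, (goodC_step_ne hPM).mpr hg, hP', hV'len, hV'pm⟩

/-- Transfer between the per-call predicate at the top level and the static one. -/
private lemma goodC_top_iff_SP (P : List ℕ) (T : ℕ) (V V₀ : List ℤ) (m N : ℕ)
    (hrel : ∀ j, j < P.length → V.getD j 1 =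
      if P.getD j 0 < T then -(V₀.getD j 1) else V₀.getD j 1) :
    GoodC P T P.length V m N ↔ SP P V₀ T m N := by
  constructor
  · rintro ⟨hm, hN, hPm, hPN, hbet, hdisj⟩
    refine ⟨hm, hN, hPm, hPN, hbet, ?_⟩
    have hvm : V.getD m 1 = V₀.getD m 1 := by
      rw [hrel m hm, if_neg (by omega)]
    rcases hdisj with ⟨h1, h2, h3⟩ | ⟨h1, h2, h3⟩
    · refine Or.inl ⟨hvm ▸ h1, h2, fun j hj1 hj2 => ?_⟩
      have hjlen : j < P.length := by omega
      have := h3 j hj1 hj2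
      have hjT : P.getD j 0 ≤ T := hbet j (by omega) (by omega)
      by_cases hj : P.getD j 0 = T
      · rw [if_pos ⟨hj, hjlen⟩] at this
        rw [hrel j hjlen, if_neg (by omega)] at this
        omega
      · rw [if_neg (fun hh => hj hh.1)] at this
        rw [hrel j hjlen, if_pos (by omega)] at this
        omega
    · refine Or.inr ⟨hvm ▸ h1, h2, fun j hj1 hj2 => ?_⟩
      have hjlen : j < P.length := by omega
      have := h3 j hj1 hj2
      have hjT : P.getD j 0 ≤ T := hbet j (by omega) (by omega)
      by_cases hj : P.getD j 0 = T
      · rw [if_pos hj]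
        rw [hrel j hjlen, if_neg (by omega)] at this
        omega
      · rw [if_neg hj]
        rw [hrel j hjlen, if_pos (by omega)] at this
        omega
  · rintro ⟨hm, hN, hPm, hPN, hbet, hdisj⟩
    refine ⟨hm, hN, hPm, hPN, hbet, ?_⟩
    have hvm : V.getD m 1 = V₀.getD m 1 := by
      rw [hrel m hm, if_neg (by omega)]
    rcases hdisj with ⟨h1, h2, h3⟩ | ⟨h1, h2, h3⟩
    · refine Or.inl ⟨hvm ▸ h1, h2, fun j hj1 hj2 => ?_⟩
      have hjlen : j < P.length := by omega
      have := h3 j hj1 hj2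
      have hjT : P.getD j 0 ≤ T := hbet j (by omega) (by omega)
      by_cases hj : P.getD j 0 = T
      · rw [if_pos ⟨hj, hjlen⟩, hrel j hjlen, if_neg (by omega)]
        omega
      · rw [if_neg (fun hh => hj hh.1), hrel j hjlen, if_pos (by omega)]
        omega
    · refine Or.inr ⟨hvm ▸ h1, h2, fun j hj1 hj2 => ?_⟩
      have hjlen : j < P.length := by omega
      have := h3 j hj1 hj2
      have hjT : P.getD j 0 ≤ T := hbet j (by omega) (by omega)
      by_cases hj : P.getD j 0 = T
      · rw [if_pos hj] at this
        rw [hrel j hjlen, if_neg (by omega)]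
        omega
      · rw [if_neg hj] at this
        rw [hrel j hjlen, if_pos (by omega)]
        omega

/-- Characterization of one full pass. -/
private lemma alg2Outer_spec (P : List ℕ) (V₀ : List ℤ) :
    ∀ (fuel T : ℕ) (V : List ℤ) (P' : List ℕ) (V' : List ℤ),
    1 ≤ T → V.length = P.length →
    (∀ j, j < V.length → V.getD j 1 = 1 ∨ V.getD j 1 = -1) →
    (∀ j, j < P.length → V.getD j 1 =
      if P.getD j 0 < T then -(V₀.getD j 1) else V₀.getD j 1) →
    (∀ T', 1 ≤ T' → T' < T → ∀ m N, ¬ SP P V₀ T' m N) →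
    alg2Outer P V T fuel = some (P', V') →
    ∃ Ts m N, SP P V₀ Ts m N ∧
      (∀ T', 1 ≤ T' → T' < Ts → ∀ m' N', ¬ SP P V₀ T' m' N') ∧
      P' = (P.set m (P.getD N 0)).set N Ts ∧ V'.length = P.length ∧
      (∀ j, j < V'.length → V'.getD j 1 = 1 ∨ V'.getD j 1 = -1) := by
  intro fuel
  induction fuel with
  | zero =>
    intro T V P' V' _ _ _ _ _ h
    rw [alg2Outer] at h
    exact absurd h (by simp)
  | succ fuel ih =>
    intro T V P' V' hT hlen hpm hrel hnofail h
    rw [alg2Outer] at h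
    cases htt : tryType P T P.length V with
    | inl PV =>
      rw [htt] at h
      have hPV : PV = (P', V') := by
        have h2 : some PV = some (P', V') := h
        exact Option.some.inj h2
      subst hPV
      obtain ⟨m, N, hm, hg, hP', hV'len, hV'pm⟩ :=
        tryType_inl_spec P T P.length V P' V' le_rfl hlen hpm htt
      refine ⟨T, m, N, (goodC_top_iff_SP P T V V₀ m N hrel).mp hg, hnofail, hP',
        hV'len.trans hlen, hV'pm⟩
    | inr V'' =>
      rw [htt] at h
      have h2 : alg2Outer P V'' (T+1) fuel = some (P', V') := h
      obtain ⟨hW1, hW2, hW3⟩ := tryType_inr_spec P T P.length V V'' le_rfl hlen htt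
      have hlen'' : V''.length = P.length := hW1.trans hlen
      have hpm'' : ∀ j, j < V''.length → V''.getD j 1 = 1 ∨ V''.getD j 1 = -1 := by
        intro j hj
        rw [hW2 j]
        by_cases hc : P.getD j 0 = T ∧ j < P.length
        · rw [if_pos hc]
          rcases hpm j (by omega) with h' | h' <;> rw [h'] <;> norm_num
        · rw [if_neg hc]
          exact hpm j (by omega)
      have hrel'' : ∀ j, j < P.length → V''.getD j 1 =
          if P.getD j 0 < T + 1 then -(V₀.getD j 1) else V₀.getD j 1 := by
        intro j hj
        rw [hW2 j]
        by_cases hPj : P.getD j 0 = T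
        · rw [if_pos ⟨hPj, hj⟩, hrel j hj, if_neg (by omega), if_pos (by omega)]
        · rw [if_neg (fun hh => hPj hh.1), hrel j hj]
          by_cases hlt : P.getD j 0 < T
          · rw [if_pos hlt, if_pos (by omega)]
          · rw [if_neg hlt, if_neg (by omega)]
      have hnofail'' : ∀ T', 1 ≤ T' → T' < T + 1 → ∀ m N, ¬ SP P V₀ T' m N := by
        intro T' h1 h2 m N hSP
        by_cases hTT : T' = T
        · subst hTT
          have hg := (goodC_top_iff_SP P T' V V₀ m N hrel).mpr hSP
          exact hW3 m N hSP.1 hg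
        · exact hnofail T' h1 (by omega) m N hSP
      exact ih (T+1) V'' P' V' (by omega) hlen'' hpm'' hrel'' hnofail'' h2

/-- Invariants along the run. -/
private lemma alg2Run_inv (k : ℕ) (P : List ℕ) (hmem : ∀ x ∈ P, 1 ≤ x ∧ x ≤ k) :
    ∀ (t : ℕ) (P₁ : List ℕ) (V₁ : List ℤ), alg2Run k P t = some (P₁, V₁) →
    P₁.length = P.length ∧ V₁.length = P.length ∧
    (∀ j, j < V₁.length → V₁.getD j 1 = 1 ∨ V₁.getD j 1 = -1) ∧
    (∀ j, j < P.length → 1 ≤ P₁.getD j 0 ∧ P₁.getD j 0 ≤ k) := by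
  intro t
  induction t with
  | zero =>
    intro P₁ V₁ h
    rw [alg2Run] at h
    obtain ⟨hP, hV⟩ := Prod.mk.injEq _ _ _ _ ▸ Option.some.inj h
    subst hP; subst hV
    refine ⟨rfl, by simp, ?_, ?_⟩
    · intro j hj
      left
      rw [getD_eq_getElem' _ _ _ hj, List.getElem_replicate]
    · intro j hj
      rw [getD_eq_getElem' _ _ _ hj]
      exact hmem _ (List.getElem_mem hj)
  | succ t iht =>
    intro P₁ V₁ h
    rw [alg2Run] at h
    cases hprev : alg2Run k P t with
    | none => rw [hprev] at h; exact absurd h (by simp)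
    | some QV =>
      obtain ⟨Q, Vq⟩ := QV
      rw [hprev] at h
      have h2 : alg2Outer Q Vq 1 k = some (P₁, V₁) := h
      obtain ⟨hQlen, hVqlen, hQpm, hQval⟩ := iht Q Vq hprev
      obtain ⟨Ts, m, N, hSP, _, hP₁, hV₁len, hV₁pm⟩ :=
        alg2Outer_spec Q Vq k 1 Vq P₁ V₁ le_rfl (hVqlen.trans hQlen.symm)
          (fun j hj => hQpm j hj)
          (fun j hj => by rw [if_neg (by have := hQval j (by omega); omega)])
          (fun T' h1 h2 => absurd (h1.trans_lt h2) (by omega)) h2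
      obtain ⟨hm, hN, hPm, hPN, _, _⟩ := hSP
      refine ⟨by rw [hP₁]; simp [hQlen], hV₁len.trans hQlen, hV₁pm, ?_⟩
      intro j hj
      rw [hP₁, getD_set', getD_set']
      have hmQ : m < Q.length := hm
      have hNQ : N < Q.length := hN
      by_cases hc1 : N = j ∧ N < (Q.set m (Q.getD N 0)).length
      · rw [if_pos hc1]
        have := hQval m (by omega)
        omega
      · rw [if_neg hc1]
        by_cases hc2 : m = j ∧ m < Q.length
        · rw [if_pos hc2]
          exact hQval N (by omega)
        · rw [if_neg hc2]
          exact hQval j hj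

/-- Any two consecutive outputs of Algorithm 2 (on a weakly increasing input list with
entries in `{1,…,k}`) differ by a single transposition with the strong homogeneous
property: the two outputs agree at every position other than two positions `p ≠ q`,
the interchanged values `a`, `b` at `p` and `q` satisfy `a ≠ b`, and every entry at a
position strictly between `p` and `q` equals `min a b`. -/
theorem stmt13 (k : ℕ) (P : List ℕ) (hsort : P.Pairwise (· ≤ ·))
    (hmem : ∀ x ∈ P, 1 ≤ x ∧ x ≤ k)
    (t : ℕ) (P₁ P₂ : List ℕ) (V₁ V₂ : List ℤ)
    (h1 : alg2Run k P t = some (P₁, V₁)) (h2 : alg2Run k P (t + 1) = some (P₂, V₂)) :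
    ∃ p q, p ≠ q ∧ p < P.length ∧ q < P.length ∧
      P₁.getD p 0 = P₂.getD q 0 ∧ P₁.getD q 0 = P₂.getD p 0 ∧
      P₁.getD p 0 ≠ P₁.getD q 0 ∧
      (∀ s, s ≠ p → s ≠ q → P₁.getD s 0 = P₂.getD s 0) ∧
      (∀ s, min p q < s → s < max p q →
        P₁.getD s 0 = min (P₁.getD p 0) (P₁.getD q 0)) := by
  obtain ⟨hP₁len, hV₁len, hV₁pm, hP₁val⟩ := alg2Run_inv k P hmem t P₁ V₁ h1
  rw [alg2Run, h1] at h2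
  have h2' : alg2Outer P₁ V₁ 1 k = some (P₂, V₂) := h2
  obtain ⟨Ts, m, N, hSP, hmin, hP₂, _, _⟩ :=
    alg2Outer_spec P₁ V₁ k 1 V₁ P₂ V₂ le_rfl (hV₁len.trans hP₁len.symm) hV₁pm
      (fun j hj => by rw [if_neg (by have := hP₁val j (by omega); omega)])
      (fun T' ha hb => absurd (ha.trans_lt hb) (by omega)) h2'
  obtain ⟨hm, hN, hPm, hPN, hbet, hdir⟩ := hSP
  have hmN : m ≠ N := by rcases hdir with ⟨_, h, _⟩ | ⟨_, h, _⟩ <;> omega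
  have hbetEq : ∀ s, min m N < s → s < max m N → P₁.getD s 0 = Ts := by
    intro s hs1 hs2
    by_contra hne
    have hlt : P₁.getD s 0 < Ts := lt_of_le_of_ne (hbet s hs1 hs2) hne
    obtain ⟨T', m', N', hT'lt, hSP'⟩ :=
      key_lemma P₁ V₁ Ts m N ⟨hm, hN, hPm, hPN, hbet, hdir⟩ s hs1 hs2 hlt
    have h1T' : 1 ≤ T' := by
      have hm' : m' < P₁.length := hSP'.1
      have := hSP'.2.2.1
      have := (hP₁val m' (by omega)).1
      omega
    exact hmin T' h1T' hT'lt m' N' hSP'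
  have hlens : (P₁.set m (P₁.getD N 0)).length = P₁.length := by simp
  have hgq : P₂.getD N 0 = Ts := by
    rw [hP₂, getD_set', if_pos ⟨rfl, by omega⟩]
  have hgp : P₂.getD m 0 = P₁.getD N 0 := by
    rw [hP₂, getD_set', if_neg (fun hh => hmN hh.1.symm), getD_set', if_pos ⟨rfl, by omega⟩]
  refine ⟨m, N, hmN, by omega, by omega, ?_, ?_, by omega, ?_, ?_⟩
  · rw [hgq, hPm]
  · rw [hgp]
  · intro s hsm hsN
    rw [hP₂, getD_set', if_neg (fun hh => hsN hh.1.symm), getD_set',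
      if_neg (fun hh => hsm hh.1.symm)]
  · intro s hs1 hs2
    rw [hbetEq s hs1 hs2, hPm]
    omega
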